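/- Under the hypotheses that every point of PG(4,q) (q even) lies in 0, q^3/2, or (q^3+q^2)/2 solids of a nonempty set H of solids, every solid in H contains exactly (q+1)^2 black points (points lying in (q^3+q^2)/2 solids of H), and |H| = (1/2)q^2(q^2+1). -/

import Mathlib

open Submodule Set

/-- Points of `PG(4,q)`: one-dimensional subspaces of `F^5`. -/
abbrev PGPoint (F : Type*) [Field F] := {W : Submodule F (Fin 5 → F) // Module.finrank F W = 1}
/-- Lines of `PG(4,q)`: two-dimensional subspaces of `F^5`. -/
abbrev PGLine (F : Type*) [Field F] := {W : Submodule F (Fin 5 → F) // Module.finrank F W = 2}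
/-- Planes of `PG(4,q)`: three-dimensional subspaces of `F^5`. -/
abbrev PGPlane (F : Type*) [Field F] := {W : Submodule F (Fin 5 → F) // Module.finrank F W = 3}
/-- Solids (hyperplanes) of `PG(4,q)`: four-dimensional subspaces of `F^5`. -/
abbrev PGSolid (F : Type*) [Field F] := {W : Submodule F (Fin 5 → F) // Module.finrank F W = 4}

variable {F : Type*} [Field F]

/-- The solids of `H` through the point `P`. -/
def solidsThrough (H : Set (PGSolid F)) (P : PGPoint F) : Set (PGSolid F) :=
  {S ∈ H | P.1 ≤ S.1}

/-- Hypothesis (I): every point lies on `0`, `q^3/2` or `(q^3+q^2)/2` solids of `H`. -/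
def CondI (q : ℕ) (H : Set (PGSolid F)) : Prop :=
  ∀ P : PGPoint F,
    (solidsThrough H P).ncard = 0 ∨
    2 * (solidsThrough H P).ncard = q ^ 3 ∨
    2 * (solidsThrough H P).ncard = q ^ 3 + q ^ 2

/-- A red point: lies on no solid of `H`. -/
def Red (H : Set (PGSolid F)) (P : PGPoint F) : Prop := (solidsThrough H P).ncard = 0

/-- A white point: lies on `q^3/2` solids of `H`. -/
def White (q : ℕ) (H : Set (PGSolid F)) (P : PGPoint F) : Prop :=
  2 * (solidsThrough H P).ncard = q ^ 3

/-- A black point: lies on `(q^3+q^2)/2` solids of `H`. -/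
def Black (q : ℕ) (H : Set (PGSolid F)) (P : PGPoint F) : Prop :=
  2 * (solidsThrough H P).ncard = q ^ 3 + q ^ 2

/-- The black points contained in a subspace `W`. -/
def blackIn (q : ℕ) (H : Set (PGSolid F)) (W : Submodule F (Fin 5 → F)) : Set (PGPoint F) :=
  {P : PGPoint F | Black q H P ∧ P.1 ≤ W}

/-!
Write `n_P` for the number of solids of `H` through the point `P`, and `θ₂ = q² + q + 1`,
`θ₃ = q³ + q² + q + 1` for the numbers of points of a plane and of a solid. Double counting gives
`∑ n_P = |H| θ₃`, `∑ n_P² = |H| (q³ + |H| θ₂)` and, for every `S ∈ H`, `∑_{P ∈ S} n_P = q³ + |H| θ₂`.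
Every point of a solid of `H` is white or black, so these are linear equations in the numbers of
white and black points, globally and on `S`. Eliminating them shows that `2|H| = q² h` for an
integer `h`, that `S` carries `h θ₂ - q (θ₃ - 2)` black points, and that `q ∣ h (h - 1)`,
`q + 1 ∣ h (h - 2)` and `q² ≤ h < q² + q`. As `q` is a power of two it divides `h` or `h - 1`,
which leaves `h ∈ {q², q² + 1}`, and `q + 1 ∣ h (h - 2)` rules out `h = q²`.
-/

theorem ncard_points_le_eq_geom_sum {V : Type*} [AddCommGroup V] [Module F V] [Finite F]
    (W : Submodule F V) {n : ℕ} (hW : Module.finrank F W = n) :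
    {P : {L : Submodule F V // Module.finrank F L = 1} | P.1 ≤ W}.ncard =
      ∑ i ∈ Finset.range n, Nat.card F ^ i := by
  rw [← Projectivization.card_of_finrank F W hW, ← Nat.card_coe_set_eq]
  refine Nat.card_congr <| (Equiv.subtypeSubtypeEquivSubtypeInter _ (· ≤ W)).trans <|
    (Equiv.subtypeEquivRight fun _ => and_comm).trans <|
    (Equiv.subtypeSubtypeEquivSubtypeInter (· ≤ W) (fun L => Module.finrank F L = 1)).symm.trans <|
    ((MapSubtype.orderIso W).toEquiv.subtypeEquiv fun L => ?_).symm.trans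
    (Projectivization.equivSubmodule F W).symm
  rw [← finrank_map_subtype_eq W L]
  rfl

theorem finrank_inf_add_one_eq_of_ne {V : Type*} [AddCommGroup V] [Module F V] {n : ℕ}
    (hV : Module.finrank F V = n + 1) {S T : Submodule F V}
    (hS : Module.finrank F S = n) (hT : Module.finrank F T = n) (hST : S ≠ T) :
    Module.finrank F ↥(S ⊓ T) + 1 = n := by
  have : FiniteDimensional F V := Module.finite_of_finrank_eq_succ hV
  have hlt : S < S ⊔ T := by
    refine lt_of_le_of_ne le_sup_left fun h => hST ?_
    exact (eq_of_le_of_finrank_eq (h ▸ le_sup_right) (hT.trans hS.symm)).symm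
  have := Submodule.finrank_lt_finrank_of_lt hlt
  have := (S ⊔ T).finrank_le
  have := Submodule.finrank_sup_add_finrank_inf_eq S T
  omega

open Finset

section Counting

variable [Fintype F]

noncomputable instance : Fintype (PGPoint F) := Fintype.ofFinite _

noncomputable instance : Fintype (PGSolid F) := Fintype.ofFinite _

open scoped Classical

noncomputable def pointsIn (W : Submodule F (Fin 5 → F)) : Finset (PGPoint F) :=
  {P | P.1 ≤ W}

@[simp]
theorem mem_pointsIn {W : Submodule F (Fin 5 → F)} {P : PGPoint F} :
    P ∈ pointsIn W ↔ P.1 ≤ W := by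
  simp [pointsIn]

theorem card_pointsIn {W : Submodule F (Fin 5 → F)} {n : ℕ} (hW : Module.finrank F W = n) :
    #(pointsIn W) = ∑ i ∈ Finset.range n, Fintype.card F ^ i := by
  rw [← Nat.card_eq_fintype_card, ← ncard_points_le_eq_geom_sum W hW, ← Set.ncard_coe_finset]
  congr
  ext
  simp

theorem card_pointsIn_solid (S : PGSolid F) :
    #(pointsIn S.1) = Fintype.card F ^ 3 + Fintype.card F ^ 2 + Fintype.card F + 1 := by
  simp [card_pointsIn S.2, Finset.sum_range_succ]
  ring

theorem card_pointsIn_inf_solids {S T : PGSolid F} (hST : S ≠ T) :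
    #(pointsIn (S.1 ⊓ T.1)) = Fintype.card F ^ 2 + Fintype.card F + 1 := by
  have := finrank_inf_add_one_eq_of_ne (n := 4) (by simp) S.2 T.2 (Subtype.coe_ne_coe.2 hST)
  simp [card_pointsIn (W := S.1 ⊓ T.1) (n := 3) (by omega), Finset.sum_range_succ]
  ring

theorem pointsIn_filter_le (W W' : Submodule F (Fin 5 → F)) :
    {P ∈ pointsIn W | P.1 ≤ W'} = pointsIn (W ⊓ W') := by
  ext
  simp

theorem ncard_solidsThrough (H : Set (PGSolid F)) (P : PGPoint F) :
    (solidsThrough H P).ncard = #{S ∈ H.toFinset | P.1 ≤ S.1} := by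
  rw [← Set.ncard_coe_finset]
  congr
  ext
  simp [solidsThrough]

theorem sum_ncard_solidsThrough_mul (H : Set (PGSolid F)) (s : Finset (PGPoint F))
    (f : PGPoint F → ℕ) :
    ∑ P ∈ s, (solidsThrough H P).ncard * f P =
      ∑ S ∈ H.toFinset, ∑ P ∈ s with P.1 ≤ S.1, f P := by
  simp_rw [ncard_solidsThrough, Finset.card_filter, Finset.sum_mul, ite_mul, one_mul, zero_mul,
    Finset.sum_filter]
  exact Finset.sum_comm

theorem sum_ncard_solidsThrough (H : Set (PGSolid F)) :
    ∑ P, (solidsThrough H P).ncard =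
      H.ncard * (Fintype.card F ^ 3 + Fintype.card F ^ 2 + Fintype.card F + 1) := by
  have := sum_ncard_solidsThrough_mul H univ 1
  simp only [Pi.one_apply, mul_one, Finset.sum_const, smul_eq_mul] at this
  rw [this, Set.ncard_eq_toFinset_card', Finset.sum_const_nat fun S _ => ?_]
  rw [← card_pointsIn_solid S]
  rfl

theorem sum_pointsIn_ncard_solidsThrough {H : Set (PGSolid F)} {S₀ : PGSolid F} (hS₀ : S₀ ∈ H) :
    ∑ P ∈ pointsIn S₀.1, (solidsThrough H P).ncard =
      Fintype.card F ^ 3 + H.ncard * (Fintype.card F ^ 2 + Fintype.card F + 1) := by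
  have hS₀' : S₀ ∈ H.toFinset := Set.mem_toFinset.2 hS₀
  have hmeet : ∀ S ∈ H.toFinset.erase S₀,
      #(pointsIn (S₀.1 ⊓ S.1)) = Fintype.card F ^ 2 + Fintype.card F + 1 := fun S hS =>
    card_pointsIn_inf_solids (Finset.ne_of_mem_erase hS).symm
  obtain ⟨k, hk⟩ : ∃ k, H.ncard = k + 1 :=
    Nat.exists_eq_add_one.2 ((Set.ncard_pos H.toFinite).2 ⟨S₀, hS₀⟩)
  have := sum_ncard_solidsThrough_mul H (pointsIn S₀.1) 1
  simp only [Pi.one_apply, mul_one, Finset.sum_const, smul_eq_mul, pointsIn_filter_le] at this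
  rw [this, ← Finset.add_sum_erase _ _ hS₀', Finset.sum_congr rfl hmeet, inf_idem,
    card_pointsIn_solid, Finset.sum_const, smul_eq_mul, Finset.card_erase_of_mem hS₀',
    ← Set.ncard_eq_toFinset_card', hk, Nat.add_sub_cancel]
  ring

theorem sum_sq_ncard_solidsThrough (H : Set (PGSolid F)) :
    ∑ P, (solidsThrough H P).ncard ^ 2 =
      H.ncard * (Fintype.card F ^ 3 + H.ncard * (Fintype.card F ^ 2 + Fintype.card F + 1)) := by
  calc ∑ P, (solidsThrough H P).ncard ^ 2
      = ∑ S ∈ H.toFinset, ∑ P ∈ pointsIn S.1, (solidsThrough H P).ncard := by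
        simp_rw [sq]
        exact sum_ncard_solidsThrough_mul H univ _
    _ = ∑ S ∈ H.toFinset,
          (Fintype.card F ^ 3 + H.ncard * (Fintype.card F ^ 2 + Fintype.card F + 1)) :=
        Finset.sum_congr rfl fun S hS =>
          sum_pointsIn_ncard_solidsThrough (Set.mem_toFinset.1 hS)
    _ = _ := by rw [Finset.sum_const, smul_eq_mul, ← Set.ncard_eq_toFinset_card']

end Counting

section Coloring

variable {q : ℕ} {H : Set (PGSolid F)}

open scoped Classical

theorem comp_two_mul_ncard_solidsThrough (hq : q ≠ 0) (hI : CondI q H) {g : ℕ → ℕ}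
    (hg : g 0 = 0) (P : PGPoint F) :
    g (2 * (solidsThrough H P).ncard) =
      (if White q H P then g (q ^ 3) else 0) + (if Black q H P then g (q ^ 3 + q ^ 2) else 0) := by
  have : 0 < q ^ 2 := by positivity
  have : 0 < q ^ 3 := by positivity
  rcases hI P with h | h | h <;> simp only [White, Black, h, mul_zero, hg] <;> split_ifs <;> omega

theorem sum_comp_two_mul_ncard_solidsThrough (hq : q ≠ 0) (hI : CondI q H) {g : ℕ → ℕ}
    (hg : g 0 = 0) (s : Finset (PGPoint F)) :
    ∑ P ∈ s, g (2 * (solidsThrough H P).ncard) =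
      g (q ^ 3) * #{P ∈ s | White q H P} + g (q ^ 3 + q ^ 2) * #{P ∈ s | Black q H P} := by
  simp only [comp_two_mul_ncard_solidsThrough hq hI hg, Finset.sum_add_distrib, Finset.sum_ite,
    Finset.sum_const, smul_eq_mul, mul_zero, add_zero]
  ring

variable [Fintype F]

theorem black_iff_not_white_of_mem (hq : q ≠ 0) (hI : CondI q H) {S : PGSolid F} (hS : S ∈ H)
    {P : PGPoint F} (hP : P.1 ≤ S.1) : Black q H P ↔ ¬White q H P := by
  have : S ∈ solidsThrough H P := ⟨hS, hP⟩
  have : (solidsThrough H P).ncard ≠ 0 := ((Set.ncard_pos (Set.toFinite _)).2 ⟨S, this⟩).ne'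
  have : q ^ 2 ≠ 0 := pow_ne_zero 2 hq
  unfold White Black
  rcases hI P with h | h | h <;> omega

theorem card_white_add_card_black (hcard : Fintype.card F = q) (hI : CondI q H) {S : PGSolid F}
    (hS : S ∈ H) :
    #{P ∈ pointsIn S.1 | White q H P} + #{P ∈ pointsIn S.1 | Black q H P} =
      q ^ 3 + q ^ 2 + q + 1 := by
  have hq : q ≠ 0 := hcard ▸ Fintype.card_ne_zero
  have hS' := card_pointsIn_solid S
  rw [hcard] at hS'
  rw [← hS', ← Finset.card_filter_add_card_filter_not (s := pointsIn S.1) (White q H),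
    Finset.filter_congr fun P hP => black_iff_not_white_of_mem hq hI hS (mem_pointsIn.1 hP)]

theorem white_black_first_moment (hcard : Fintype.card F = q) (hI : CondI q H) :
    q ^ 3 * #{P | White q H P} + (q ^ 3 + q ^ 2) * #{P | Black q H P} =
      2 * H.ncard * (q ^ 3 + q ^ 2 + q + 1) := by
  have hq : q ≠ 0 := hcard ▸ Fintype.card_ne_zero
  have := sum_comp_two_mul_ncard_solidsThrough hq hI (g := id) rfl univ
  rw [mul_assoc, ← hcard, ← sum_ncard_solidsThrough, Finset.mul_sum, hcard]
  exact this.symm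

theorem white_black_second_moment (hcard : Fintype.card F = q) (hI : CondI q H) :
    q ^ 6 * #{P | White q H P} + (q ^ 3 + q ^ 2) ^ 2 * #{P | Black q H P} =
      4 * H.ncard * (q ^ 3 + H.ncard * (q ^ 2 + q + 1)) := by
  have hq : q ≠ 0 := hcard ▸ Fintype.card_ne_zero
  rw [show q ^ 6 = (q ^ 3) ^ 2 by ring,
    ← sum_comp_two_mul_ncard_solidsThrough hq hI (g := (· ^ 2)) (zero_pow two_ne_zero), mul_assoc,
    ← hcard, ← sum_sq_ncard_solidsThrough, Finset.mul_sum]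
  simp_rw [mul_pow]
  norm_num

theorem white_black_in_solid (hcard : Fintype.card F = q) (hI : CondI q H) {S : PGSolid F}
    (hS : S ∈ H) :
    q ^ 3 * #{P ∈ pointsIn S.1 | White q H P} + (q ^ 3 + q ^ 2) * #{P ∈ pointsIn S.1 | Black q H P} =
      2 * (q ^ 3 + H.ncard * (q ^ 2 + q + 1)) := by
  have hq : q ≠ 0 := hcard ▸ Fintype.card_ne_zero
  have := sum_comp_two_mul_ncard_solidsThrough hq hI (g := id) rfl (pointsIn S.1)
  rw [← hcard, ← sum_pointsIn_ncard_solidsThrough hS, Finset.mul_sum, hcard]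
  exact this.symm

theorem ncard_blackIn (W : Submodule F (Fin 5 → F)) :
    (blackIn q H W).ncard = #{P ∈ pointsIn W | Black q H P} := by
  rw [← Set.ncard_coe_finset]
  congr
  ext
  simp [blackIn, and_comm]

end Coloring

theorem pow_dvd_or_pow_dvd_sub_one_of_pow_dvd_mul {p h : ℤ} (hp : Prime p) {n : ℕ}
    (hd : p ^ n ∣ h * (h - 1)) : p ^ n ∣ h ∨ p ^ n ∣ h - 1 := by
  have hcop : ¬(p ∣ h ∧ p ∣ h - 1) := fun ⟨h₁, h₂⟩ =>
    hp.not_dvd_one (by simpa using dvd_sub h₁ h₂)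
  by_cases hph : p ∣ h
  · exact .inl ((hp.coprime_iff_not_dvd.2 fun h₂ => hcop ⟨hph, h₂⟩).pow_left.dvd_of_dvd_mul_right hd)
  · exact .inr ((hp.coprime_iff_not_dvd.2 hph).pow_left.dvd_of_dvd_mul_left hd)

theorem eq_sq_add_one_of_dvd {n : ℕ} (hn : 0 < n) {q h : ℤ} (hq : q = 2 ^ n)
    (hlo : q ^ 2 ≤ h) (hhi : h < q ^ 2 + q) (hdvd : q ∣ h * (h - 1))
    (hdvd' : q + 1 ∣ h * (h - 2)) : h = q ^ 2 + 1 := by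
  have hq2 : 2 ≤ q := hq ▸ le_self_pow₀ (by norm_num) hn.ne'
  rcases pow_dvd_or_pow_dvd_sub_one_of_pow_dvd_mul Int.prime_two (hq ▸ hdvd) with ⟨m, hm⟩ | ⟨m, hm⟩
  · rw [← hq] at hm
    have : m = q := by
      have : q - 1 < m := by nlinarith
      have : m < q + 1 := by nlinarith
      omega
    have hone : (q + 1) * ((q - 1) * (q ^ 2 - 1)) - h * (h - 2) = 1 := by
      rw [hm, this]
      ring
    have := Int.le_of_dvd one_pos (hone ▸ dvd_sub (dvd_mul_right _ _) hdvd')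
    omega
  · rw [← hq] at hm
    have : m = q := by
      have : q - 1 < m := by nlinarith
      have : m < q + 1 := by nlinarith
      omega
    subst this
    linear_combination hm

section CountingEquations

variable {q t w b wS bS h : ℤ}

theorem sq_dvd_two_mul_of_solid
    (e3 : q ^ 3 * wS + (q ^ 3 + q ^ 2) * bS = 2 * (q ^ 3 + t * (q ^ 2 + q + 1)))
    (e4 : wS + bS = q ^ 3 + q ^ 2 + q + 1) : q ^ 2 ∣ 2 * t := by
  have hcop : IsCoprime q (q ^ 2 + q + 1) := ⟨-(q + 1), 1, by ring⟩
  refine hcop.pow_left.dvd_of_dvd_mul_right ⟨bS + q * (q ^ 3 + q ^ 2 + q + 1) - 2 * q, ?_⟩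
  linear_combination q ^ 3 * e4 - e3

theorem black_eq_of_solid (hq : q ≠ 0) (ht : 2 * t = q ^ 2 * h)
    (e3 : q ^ 3 * wS + (q ^ 3 + q ^ 2) * bS = 2 * (q ^ 3 + t * (q ^ 2 + q + 1)))
    (e4 : wS + bS = q ^ 3 + q ^ 2 + q + 1) :
    bS = h * (q ^ 2 + q + 1) - q * (q ^ 3 + q ^ 2 + q - 1) := by
  refine mul_left_cancel₀ (pow_ne_zero 2 hq) ?_
  linear_combination e3 - q ^ 3 * e4 + (q ^ 2 + q + 1) * ht

-- With `2t = q² h`, dividing `e1` by `q²` and `e2` by `q⁴` gives `h θ₃ = q w + (q + 1) b` and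
-- `2qh + h² θ₂ = q² w + (q + 1)² b`; eliminate `w`, resp. `b`.
theorem mul_black_eq (hq : q ≠ 0) (ht : 2 * t = q ^ 2 * h)
    (e1 : q ^ 3 * w + (q ^ 3 + q ^ 2) * b = 2 * t * (q ^ 3 + q ^ 2 + q + 1))
    (e2 : q ^ 6 * w + (q ^ 3 + q ^ 2) ^ 2 * b = 4 * t * (q ^ 3 + t * (q ^ 2 + q + 1))) :
    (q + 1) * b = h * (h * (q ^ 2 + q + 1) - q * (q ^ 3 + q ^ 2 + q - 1)) := by
  refine mul_left_cancel₀ (pow_ne_zero 4 hq) ?_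
  linear_combination e2 - q ^ 3 * e1 +
    (2 * q ^ 3 + (q ^ 2 + q + 1) * (2 * t + q ^ 2 * h) - q ^ 3 * (q ^ 3 + q ^ 2 + q + 1)) * ht

theorem mul_white_eq (hq : q ≠ 0) (ht : 2 * t = q ^ 2 * h)
    (e1 : q ^ 3 * w + (q ^ 3 + q ^ 2) * b = 2 * t * (q ^ 3 + q ^ 2 + q + 1))
    (e2 : q ^ 6 * w + (q ^ 3 + q ^ 2) ^ 2 * b = 4 * t * (q ^ 3 + t * (q ^ 2 + q + 1))) :
    q * w = h * ((q + 1) * (q ^ 3 + q ^ 2 + q + 1) - 2 * q - h * (q ^ 2 + q + 1)) := by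
  refine mul_left_cancel₀ (pow_ne_zero 4 hq) ?_
  linear_combination q ^ 2 * (q + 1) * e1 - e2 + (q ^ 2 * (q + 1) * (q ^ 3 + q ^ 2 + q + 1)
    - 2 * q ^ 3 - (q ^ 2 + q + 1) * (2 * t + q ^ 2 * h)) * ht

end CountingEquations

theorem two_mul_eq_of_counts {q t w b wS bS : ℤ} {n : ℕ} (hn : 0 < n) (hq : q = 2 ^ n)
    (hwS : 0 ≤ wS) (hbS : 0 ≤ bS)
    (e1 : q ^ 3 * w + (q ^ 3 + q ^ 2) * b = 2 * t * (q ^ 3 + q ^ 2 + q + 1))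
    (e2 : q ^ 6 * w + (q ^ 3 + q ^ 2) ^ 2 * b = 4 * t * (q ^ 3 + t * (q ^ 2 + q + 1)))
    (e3 : q ^ 3 * wS + (q ^ 3 + q ^ 2) * bS = 2 * (q ^ 3 + t * (q ^ 2 + q + 1)))
    (e4 : wS + bS = q ^ 3 + q ^ 2 + q + 1) :
    2 * t = q ^ 2 * (q ^ 2 + 1) := by
  have hq2 : 2 ≤ q := hq ▸ le_self_pow₀ (by norm_num) hn.ne'
  have hq0 : q ≠ 0 := by omega
  obtain ⟨h, ht⟩ := sq_dvd_two_mul_of_solid e3 e4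
  have hb := black_eq_of_solid hq0 ht e3 e4
  have hlo : q ^ 2 ≤ h := by nlinarith
  have hhi : h < q ^ 2 + q := by nlinarith
  -- reduce `q w = h wS` modulo `q` and `(q + 1) b = h bS` modulo `q + 1`
  have hdvd : q ∣ h * (h - 1) := ⟨h * (q ^ 3 + 2 * q ^ 2 + 2 * q) - h ^ 2 * (q + 1) - w, by
    linear_combination mul_white_eq hq0 ht e1 e2⟩
  have hdvd' : q + 1 ∣ h * (h - 2) := ⟨b - h * (h * q - q ^ 3 - q + 2), by
    linear_combination -mul_black_eq hq0 ht e1 e2⟩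
  rw [ht, eq_sq_add_one_of_dvd hn hq hlo hhi hdvd hdvd']

theorem stmt2 (q : ℕ) (hq : ∃ n : ℕ, 0 < n ∧ q = 2 ^ n)
    (F : Type*) [Field F] [Fintype F] (hcard : Fintype.card F = q)
    (H : Set (PGSolid F)) (hne : H.Nonempty) (hI : CondI q H) :
    (∀ S ∈ H, (blackIn q H S.1).ncard = (q + 1) ^ 2) ∧
    2 * H.ncard = q ^ 2 * (q ^ 2 + 1) := by
  obtain ⟨n, hn, hq⟩ := hq
  obtain ⟨S₀, hS₀⟩ := hne
  have hq0 : q ≠ 0 := hcard ▸ Fintype.card_ne_zero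
  have e1 := white_black_first_moment hcard hI
  have e2 := white_black_second_moment hcard hI
  have e3 := white_black_in_solid hcard hI hS₀
  have e4 := card_white_add_card_black hcard hI hS₀
  zify at hq e1 e2 e3 e4
  have hH : 2 * H.ncard = q ^ 2 * (q ^ 2 + 1) := by
    exact_mod_cast two_mul_eq_of_counts hn hq (by positivity) (by positivity) e1 e2 e3 e4
  refine ⟨fun S hS => ?_, hH⟩
  have e3 := white_black_in_solid hcard hI hS
  have e4 := card_white_add_card_black hcard hI hS
  zify at hH e3 e4
  rw [ncard_blackIn]
  zify
  rw [black_eq_of_solid (by exact_mod_cast hq0) hH e3 e4]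
  ring
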